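/- Let (V^j, d^j)_{j=0}^{n} be a cochain complex of finite-dimensional complex inner product spaces, with Laplacians Δ_j = (d^j)* d^j + d^{j−1} (d^{j−1})*. Then for every t > 0 and every integer N with 0 ≤ N ≤ n, ∑_{j=0}^{N} (−1)^{N−j} Tr(exp(−t Δ_j)) ≥ ∑_{j=0}^{N} (−1)^{N−j} dim ker Δ_j. -/

import Mathlib

open scoped ComplexOrder

/-- The Hodge Laplacians `Δ_j = (d^j)* d^j + d^{j-1} (d^{j-1})*` of a cochain complex
`(V^j, d^j)` of finite-dimensional complex inner product spaces, with the conventions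
`d^{-1} = 0` (so that `Δ_0 = (d^0)* d^0`). -/
noncomputable def hodgeLaplacian (V : ℕ → Type*) [∀ j, NormedAddCommGroup (V j)]
    [∀ j, InnerProductSpace ℂ (V j)] [∀ j, FiniteDimensional ℂ (V j)]
    (d : ∀ j, V j →ₗ[ℂ] V (j + 1)) : ∀ j, V j →ₗ[ℂ] V j :=
  fun j => match j with
  | 0 => (LinearMap.adjoint (d 0)).comp (d 0)
  | j + 1 => (LinearMap.adjoint (d (j + 1))).comp (d (j + 1)) +
      (d j).comp (LinearMap.adjoint (d j))

/-- The heat trace `Tr (exp (−t Δ_j))` of the `j`-th Hodge Laplacian. -/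
noncomputable def heatTrace (V : ℕ → Type*) [∀ j, NormedAddCommGroup (V j)]
    [∀ j, InnerProductSpace ℂ (V j)] [∀ j, FiniteDimensional ℂ (V j)]
    (d : ∀ j, V j →ₗ[ℂ] V (j + 1)) (t : ℝ) (j : ℕ) : ℂ :=
  LinearMap.trace ℂ (V j)
    (NormedSpace.exp
      ((-(t : ℂ)) • (LinearMap.toContinuousLinearMap (hodgeLaplacian V d j)))).toLinearMap

/-!
Write `Δ_j = B_j + C_j` with `B_j = (d^j)* d^j` and `C_j = d^{j-1} (d^{j-1})*`. The complex
condition gives `B_j C_j = C_j B_j = 0`, hence `exp (-t Δ_j) = exp (-t B_j) + exp (-t C_j) - 1`;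
and `ker Δ_j = ker d^j ⊓ (im d^{j-1})ᗮ` with `im d^{j-1} ≤ ker d^j`, hence
`dim ker Δ_j = dim ker B_j + dim ker C_j - dim V^j`. So the reduced heat trace
`R(T) = Tr (exp (-t T)) - dim ker T` satisfies `R(Δ_j) = R(B_j) + R(C_j)`. Since
`Tr ((A A*)^k) = Tr ((A* A)^k)` for `k ≥ 1` and both `ker (A A*)` and `ker (A* A)` have codimension
`rank A`, also `R(A A*) = R(A* A)`; so `R(C_{j+1}) = R(B_j)` and the alternating sum telescopes
to `R(B_N)`. Finally `R(T) ≥ 0` for symmetric `T`, being the sum of `exp (-t λ)` over the nonzero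
eigenvalues `λ` of `T`.
-/

open Module NormedSpace LinearMap
open scoped Nat InnerProductSpace

section Exp

variable {𝔸 : Type*} [NormedRing 𝔸] [NormedAlgebra ℚ 𝔸] [CompleteSpace 𝔸]

theorem NormedSpace.exp_mul_eq_self_of_mul_eq_zero {x y : 𝔸} (h : x * y = 0) :
    exp x * y = y := by
  simpa using (show SemiconjBy y 0 x by simp [SemiconjBy, h]).exp_right.eq.symm

theorem NormedSpace.mul_exp_eq_self_of_mul_eq_zero {x y : 𝔸} (h : y * x = 0) :
    y * exp x = y := by
  simpa using (show SemiconjBy y x 0 by simp [SemiconjBy, h]).exp_right.eq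

theorem NormedSpace.exp_add_of_mul_eq_zero {x y : 𝔸} (hxy : x * y = 0) (hyx : y * x = 0) :
    exp (x + y) = exp x + exp y - 1 := by
  have hx : x * (exp y - 1) = 0 := by
    rw [mul_sub, mul_exp_eq_self_of_mul_eq_zero hxy, mul_one, sub_self]
  calc exp (x + y) = exp x * (1 + (exp y - 1)) := by
        rw [exp_add_of_commute (hxy.trans hyx.symm), add_sub_cancel]
    _ = exp x + exp y - 1 := by
        rw [mul_add, mul_one, exp_mul_eq_self_of_mul_eq_zero hx, add_sub_assoc]

end Exp

theorem ContinuousLinearMap.exp_apply_of_apply_eq_smul {𝕜 E : Type*} [RCLike 𝕜]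
    [NormedAddCommGroup E] [NormedSpace 𝕜 E] [CompleteSpace E]
    {X : E →L[𝕜] E} {v : E} {μ : 𝕜} (h : X v = μ • v) : exp X v = exp μ • v := by
  have hpow : ∀ n : ℕ, (X ^ n) v = μ ^ n • v := by
    intro n
    induction n with
    | zero => simp
    | succ n ih => rw [pow_succ', mul_apply_eq_comp, ih, map_smul, h, smul_smul, pow_succ]
  refine ((exp_series_hasSum_exp' (𝕂 := 𝕜) X).mapL (apply 𝕜 E v)).unique ?_
  simpa [hpow, smul_smul] using (exp_series_hasSum_exp' (𝕂 := 𝕜) μ).smul_const v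

theorem LinearMap.trace_comp_pow_succ_comm {R M N : Type*} [CommRing R]
    [AddCommGroup M] [Module R M] [Module.Free R M] [Module.Finite R M]
    [AddCommGroup N] [Module R N] [Module.Free R N] [Module.Finite R N]
    (f : M →ₗ[R] N) (g : N →ₗ[R] M) (n : ℕ) :
    trace R M ((g ∘ₗ f) ^ (n + 1)) = trace R N ((f ∘ₗ g) ^ (n + 1)) := by
  have hpow : (g ∘ₗ f) ^ (n + 1) = g ∘ₗ (((f ∘ₗ g) ^ n) ∘ₗ f) := by
    induction n with
    | zero => rfl
    | succ n ih =>
      rw [pow_succ, ih, pow_succ]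
      rfl
  rw [hpow, trace_comp_comm', pow_succ]
  rfl

section TraceExp

variable {𝕜 E F : Type*} [RCLike 𝕜]
  [NormedAddCommGroup E] [NormedSpace 𝕜 E] [FiniteDimensional 𝕜 E]
  [NormedAddCommGroup F] [NormedSpace 𝕜 F] [FiniteDimensional 𝕜 F]

theorem hasSum_trace_exp (X : E →L[𝕜] E) :
    HasSum (fun n => (n ! : 𝕜)⁻¹ * trace 𝕜 E (X.toLinearMap ^ n))
      (trace 𝕜 E (exp X).toLinearMap) := by
  have := FiniteDimensional.complete 𝕜 (E →L[𝕜] E)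
  have htr := (trace 𝕜 E ∘ₗ ContinuousLinearMap.coeLM 𝕜).continuous_of_finiteDimensional
  simpa [Function.comp_def, ContinuousLinearMap.toLinearMap_pow] using
    (exp_series_hasSum_exp' (𝕂 := 𝕜) X).map _ htr

theorem trace_exp_comp_sub_finrank_comm (A : E →L[𝕜] F) (B : F →L[𝕜] E) :
    trace 𝕜 E (exp (B ∘L A)).toLinearMap - finrank 𝕜 E =
      trace 𝕜 F (exp (A ∘L B)).toLinearMap - finrank 𝕜 F := by
  have hsum := (hasSum_trace_exp (B ∘L A)).sub (hasSum_trace_exp (A ∘L B))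
  rw [sub_eq_sub_iff_sub_eq_sub]
  refine (hsum.unique (hasSum_single 0 fun n hn => ?_)).trans ?_
  · obtain ⟨n, rfl⟩ := Nat.exists_eq_succ_of_ne_zero hn
    rw [ContinuousLinearMap.toLinearMap_comp, ContinuousLinearMap.toLinearMap_comp,
      trace_comp_pow_succ_comm, sub_self]
  · simp

theorem trace_exp_add_of_mul_eq_zero {X Y : E →L[𝕜] E} (hXY : X * Y = 0) (hYX : Y * X = 0) :
    trace 𝕜 E (exp (X + Y)).toLinearMap =
      trace 𝕜 E (exp X).toLinearMap + trace 𝕜 E (exp Y).toLinearMap - finrank 𝕜 E := by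
  let +nondep : NormedAlgebra ℚ (E →L[𝕜] E) := .restrictScalars ℚ 𝕜 (E →L[𝕜] E)
  have := FiniteDimensional.complete 𝕜 (E →L[𝕜] E)
  rw [exp_add_of_mul_eq_zero hXY hYX]
  simp

end TraceExp

section InnerProduct

variable {𝕜 E F G : Type*} [RCLike 𝕜]
  [NormedAddCommGroup E] [InnerProductSpace 𝕜 E] [FiniteDimensional 𝕜 E]
  [NormedAddCommGroup F] [InnerProductSpace 𝕜 F] [FiniteDimensional 𝕜 F]
  [NormedAddCommGroup G] [InnerProductSpace 𝕜 G] [FiniteDimensional 𝕜 G]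

theorem LinearMap.IsSymmetric.trace_exp_smul {T : E →ₗ[𝕜] E} (hT : T.IsSymmetric) (s : ℝ) :
    trace 𝕜 E (exp ((s : 𝕜) • T.toContinuousLinearMap)).toLinearMap =
      ∑ i, (Real.exp (s * hT.eigenvalues rfl i) : 𝕜) := by
  have := FiniteDimensional.complete 𝕜 E
  rw [trace_eq_sum_inner _ (hT.eigenvectorBasis rfl)]
  refine Fintype.sum_congr _ _ fun i => ?_
  have heigen : ((s : 𝕜) • T.toContinuousLinearMap) (hT.eigenvectorBasis rfl i) =
      ((s * hT.eigenvalues rfl i : ℝ) : 𝕜) • hT.eigenvectorBasis rfl i := by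
    simp [hT.apply_eigenvectorBasis, smul_smul]
  rw [ContinuousLinearMap.coe_coe, ContinuousLinearMap.exp_apply_of_apply_eq_smul heigen,
    inner_smul_right, OrthonormalBasis.inner_eq_one, mul_one, Real.exp_eq_exp_ℝ]
  exact (algebraMap_exp_comm _).symm

theorem LinearMap.IsSymmetric.finrank_ker_le_trace_exp_smul {T : E →ₗ[𝕜] E}
    (hT : T.IsSymmetric) (s : ℝ) :
    (finrank 𝕜 (ker T) : 𝕜) ≤ trace 𝕜 E (exp ((s : 𝕜) • T.toContinuousLinearMap)).toLinearMap := by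
  classical
  rw [hT.trace_exp_smul, ← Module.End.eigenspace_zero, ← hT.card_filter_eigenvalues_eq rfl,
    ← RCLike.ofReal_natCast, ← RCLike.ofReal_sum, RCLike.ofReal_le_ofReal]
  calc (Finset.card {i | (hT.eigenvalues rfl i : 𝕜) = 0} : ℝ)
      = ∑ i ∈ {i | (hT.eigenvalues rfl i : 𝕜) = 0}, Real.exp (s * hT.eigenvalues rfl i) := by
        rw [Finset.cast_card]
        refine Finset.sum_congr rfl fun i hi => ?_
        simp_all
    _ ≤ ∑ i, Real.exp (s * hT.eigenvalues rfl i) :=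
        Finset.sum_le_sum_of_subset_of_nonneg (Finset.subset_univ _) fun _ _ _ =>
          (Real.exp_pos _).le

theorem finrank_ker_self_comp_adjoint_add (A : E →ₗ[𝕜] F) :
    finrank 𝕜 (ker (A ∘ₗ adjoint A)) + finrank 𝕜 E =
      finrank 𝕜 (ker (adjoint A ∘ₗ A)) + finrank 𝕜 F := by
  have hE := finrank_range_add_finrank_ker A
  have hF := finrank_range_add_finrank_ker (adjoint A)
  rw [ker_self_comp_adjoint, ker_adjoint_comp_self]
  rw [finrank_range_adjoint] at hF
  omega

theorem ker_adjoint_comp_add_comp_adjoint (A₁ : F →ₗ[𝕜] E) (A₂ : E →ₗ[𝕜] G) :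
    ker (adjoint A₂ ∘ₗ A₂ + A₁ ∘ₗ adjoint A₁) = ker A₂ ⊓ ker (adjoint A₁) := by
  refine le_antisymm (fun x hx => ?_) fun x ⟨h₂, h₁⟩ => by simp_all
  have hnorm : ‖A₂ x‖ ^ 2 + ‖adjoint A₁ x‖ ^ 2 = 0 := by
    have := congrArg (fun y => RCLike.re ⟪x, y⟫_𝕜) (mem_ker.mp hx)
    simpa [inner_add_right, adjoint_inner_right, ← adjoint_inner_left, inner_self_eq_norm_sq]
      using this
  obtain ⟨h₂, h₁⟩ := (add_eq_zero_iff_of_nonneg (by positivity) (by positivity)).mp hnorm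
  exact ⟨by simpa using h₂, by simpa using h₁⟩

theorem finrank_ker_adjoint_comp_add_comp_adjoint_add {A₁ : F →ₗ[𝕜] E} {A₂ : E →ₗ[𝕜] G}
    (h : A₂ ∘ₗ A₁ = 0) :
    finrank 𝕜 (ker (adjoint A₂ ∘ₗ A₂ + A₁ ∘ₗ adjoint A₁)) + finrank 𝕜 E =
      finrank 𝕜 (ker (adjoint A₂ ∘ₗ A₂)) + finrank 𝕜 (ker (A₁ ∘ₗ adjoint A₁)) := by
  have hker := Submodule.finrank_add_inf_finrank_orthogonal (range_le_ker_iff.mpr h)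
  have hrange := (range A₁).finrank_add_finrank_orthogonal
  rw [orthogonal_range, inf_comm, ← ker_adjoint_comp_add_comp_adjoint] at hker
  rw [orthogonal_range] at hrange
  rw [ker_adjoint_comp_self, ker_self_comp_adjoint]
  omega

end InnerProduct

section HeatTrace

variable {𝕜 E F G : Type*} [RCLike 𝕜]
  [NormedAddCommGroup E] [InnerProductSpace 𝕜 E] [FiniteDimensional 𝕜 E]
  [NormedAddCommGroup F] [InnerProductSpace 𝕜 F] [FiniteDimensional 𝕜 F]
  [NormedAddCommGroup G] [InnerProductSpace 𝕜 G] [FiniteDimensional 𝕜 G]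
  (t : ℝ)

noncomputable def heatTraceOf (T : E →ₗ[𝕜] E) : 𝕜 :=
  trace 𝕜 E (exp ((-(t : 𝕜)) • T.toContinuousLinearMap)).toLinearMap

noncomputable def reducedHeatTraceOf (T : E →ₗ[𝕜] E) : 𝕜 :=
  heatTraceOf t T - finrank 𝕜 (ker T)

theorem heatTraceOf_add_of_comp_eq_zero {B C : E →ₗ[𝕜] E} (hBC : B ∘ₗ C = 0)
    (hCB : C ∘ₗ B = 0) :
    heatTraceOf t (B + C) = heatTraceOf t B + heatTraceOf t C - finrank 𝕜 E := by
  have hmul : ∀ {P Q : E →ₗ[𝕜] E}, P ∘ₗ Q = 0 →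
      ((-(t : 𝕜)) • P.toContinuousLinearMap) * ((-(t : 𝕜)) • Q.toContinuousLinearMap) = 0 := by
    intro P Q h
    ext x
    have hx : P (Q x) = 0 := LinearMap.congr_fun h x
    simp [hx]
  rw [heatTraceOf, map_add, smul_add, trace_exp_add_of_mul_eq_zero (hmul hBC) (hmul hCB)]
  rfl

theorem heatTraceOf_self_comp_adjoint_sub_finrank (A : E →ₗ[𝕜] F) :
    heatTraceOf t (A ∘ₗ adjoint A) - finrank 𝕜 F =
      heatTraceOf t (adjoint A ∘ₗ A) - finrank 𝕜 E := by
  have h₁ : (-(t : 𝕜)) • (adjoint A ∘ₗ A).toContinuousLinearMap =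
      ((-(t : 𝕜)) • adjoint A).toContinuousLinearMap ∘L A.toContinuousLinearMap := by
    ext; simp
  have h₂ : (-(t : 𝕜)) • (A ∘ₗ adjoint A).toContinuousLinearMap =
      A.toContinuousLinearMap ∘L ((-(t : 𝕜)) • adjoint A).toContinuousLinearMap := by
    ext; simp
  rw [heatTraceOf, heatTraceOf, h₁, h₂]
  exact (trace_exp_comp_sub_finrank_comm _ _).symm

theorem LinearMap.IsSymmetric.reducedHeatTraceOf_nonneg {T : E →ₗ[𝕜] E}
    (hT : T.IsSymmetric) : 0 ≤ reducedHeatTraceOf t T := by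
  rw [reducedHeatTraceOf, sub_nonneg]
  simpa [heatTraceOf] using hT.finrank_ker_le_trace_exp_smul (-t)

theorem reducedHeatTraceOf_self_comp_adjoint (A : E →ₗ[𝕜] F) :
    reducedHeatTraceOf t (A ∘ₗ adjoint A) = reducedHeatTraceOf t (adjoint A ∘ₗ A) := by
  have hdim : (finrank 𝕜 (ker (A ∘ₗ adjoint A)) : 𝕜) + finrank 𝕜 E =
      finrank 𝕜 (ker (adjoint A ∘ₗ A)) + finrank 𝕜 F := by
    exact_mod_cast finrank_ker_self_comp_adjoint_add A
  rw [reducedHeatTraceOf, reducedHeatTraceOf]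
  linear_combination heatTraceOf_self_comp_adjoint_sub_finrank t A - hdim

theorem reducedHeatTraceOf_adjoint_comp_add_comp_adjoint {A₁ : F →ₗ[𝕜] E} {A₂ : E →ₗ[𝕜] G}
    (h : A₂ ∘ₗ A₁ = 0) :
    reducedHeatTraceOf t (adjoint A₂ ∘ₗ A₂ + A₁ ∘ₗ adjoint A₁) =
      reducedHeatTraceOf t (adjoint A₂ ∘ₗ A₂) + reducedHeatTraceOf t (A₁ ∘ₗ adjoint A₁) := by
  have hz : ∀ y, A₂ (A₁ y) = 0 := LinearMap.congr_fun h
  have hz' : ∀ y, adjoint A₁ (adjoint A₂ y) = 0 :=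
    LinearMap.congr_fun (show adjoint A₁ ∘ₗ adjoint A₂ = 0 by rw [← adjoint_comp, h, map_zero])
  have hsplit := heatTraceOf_add_of_comp_eq_zero t
    (B := adjoint A₂ ∘ₗ A₂) (C := A₁ ∘ₗ adjoint A₁) (by ext; simp [hz]) (by ext; simp [hz'])
  have hdim : (finrank 𝕜 (ker (adjoint A₂ ∘ₗ A₂ + A₁ ∘ₗ adjoint A₁)) : 𝕜) + finrank 𝕜 E =
      finrank 𝕜 (ker (adjoint A₂ ∘ₗ A₂)) + finrank 𝕜 (ker (A₁ ∘ₗ adjoint A₁)) := by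
    exact_mod_cast finrank_ker_adjoint_comp_add_comp_adjoint_add h
  rw [reducedHeatTraceOf, reducedHeatTraceOf, reducedHeatTraceOf]
  linear_combination hsplit - hdim

end HeatTrace

theorem Finset.sum_range_neg_one_pow_mul_eq_of_eq_add {R : Type*} [Ring R] {a b : ℕ → R}
    {N : ℕ} (h0 : a 0 = b 0) (hsucc : ∀ j < N, a (j + 1) = b (j + 1) + b j) :
    ∑ j ∈ range (N + 1), (-1) ^ (N - j) * a j = b N := by
  induction N with
  | zero => simp [h0]
  | succ N ih =>
    have hsign : ∀ j ∈ range (N + 1), (-1 : R) ^ (N + 1 - j) * a j = -((-1) ^ (N - j) * a j) := by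
      intro j hj
      rw [Nat.sub_add_comm (Nat.lt_succ_iff.mp (mem_range.mp hj)), pow_succ]
      noncomm_ring
    rw [sum_range_succ, sum_congr rfl hsign, sum_neg_distrib,
      ih fun j hj => hsucc j (Nat.lt_succ_of_lt hj), hsucc N (Nat.lt_succ_self N)]
    simp

theorem heat_trace_alternating_sum_ge_general
    (n : ℕ)
    (V : ℕ → Type*) [∀ j, NormedAddCommGroup (V j)]
    [∀ j, InnerProductSpace ℂ (V j)] [∀ j, FiniteDimensional ℂ (V j)]
    (d : ∀ j, V j →ₗ[ℂ] V (j + 1))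
    (hcomplex : ∀ j, j + 2 ≤ n → (d (j + 1)).comp (d j) = 0)
    (hdn : d n = 0) :
    ∀ t : ℝ, 0 < t → ∀ N ≤ n,
      ((∑ j ∈ Finset.range (N + 1), (-1 : ℤ) ^ (N - j) *
          (Module.finrank ℂ (LinearMap.ker (hodgeLaplacian V d j)) : ℤ) : ℤ) : ℂ) ≤
        ∑ j ∈ Finset.range (N + 1), (-1 : ℂ) ^ (N - j) * heatTrace V d t j := by
  intro t _ N hN
  have hd : ∀ j < N, d (j + 1) ∘ₗ d j = 0 := fun j hj => by
    rcases Nat.lt_or_ge (j + 1) n with hlt | _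
    · exact hcomplex j hlt
    · obtain rfl : n = j + 1 := by omega
      rw [hdn, zero_comp]
  have htelescope : ∑ j ∈ Finset.range (N + 1),
      (-1 : ℂ) ^ (N - j) * reducedHeatTraceOf t (hodgeLaplacian V d j) =
        reducedHeatTraceOf t (adjoint (d N) ∘ₗ d N) :=
    Finset.sum_range_neg_one_pow_mul_eq_of_eq_add
      (a := fun j => reducedHeatTraceOf t (hodgeLaplacian V d j))
      (b := fun j => reducedHeatTraceOf t (adjoint (d j) ∘ₗ d j)) rfl fun j hj => by
      rw [hodgeLaplacian, reducedHeatTraceOf_adjoint_comp_add_comp_adjoint t (hd j hj),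
        reducedHeatTraceOf_self_comp_adjoint]
  have hnonneg := (isSymmetric_adjoint_comp_self (d N)).reducedHeatTraceOf_nonneg t
  rw [← htelescope] at hnonneg
  simp only [reducedHeatTraceOf, mul_sub, Finset.sum_sub_distrib, sub_nonneg] at hnonneg
  push_cast
  exact hnonneg

/-- **Heat trace inequality.**
Let `(V^j, d^j)_{j=0}^{n}` be a cochain complex of finite-dimensional complex inner
product spaces (so `d^{j+1} ∘ d^j = 0`, with the conventions `d^{-1} = 0`, `d^n = 0`),
with Laplacians `Δ_j = (d^j)* d^j + d^{j-1} (d^{j-1})*`.  Then for every `t > 0` and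
every `0 ≤ N ≤ n`,
`∑_{j=0}^{N} (−1)^{N−j} Tr (exp (−t Δ_j)) ≥ ∑_{j=0}^{N} (−1)^{N−j} dim ker Δ_j`
(in particular the left-hand side is a real number). -/
theorem heat_trace_alternating_sum_ge
    (n : ℕ) (hn : 0 < n)
    (V : ℕ → Type*) [∀ j, NormedAddCommGroup (V j)]
    [∀ j, InnerProductSpace ℂ (V j)] [∀ j, FiniteDimensional ℂ (V j)]
    (d : ∀ j, V j →ₗ[ℂ] V (j + 1))
    (hcomplex : ∀ j, j + 2 ≤ n → (d (j + 1)).comp (d j) = 0)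
    (hdn : d n = 0) :
    ∀ t : ℝ, 0 < t → ∀ N ≤ n,
      ((∑ j ∈ Finset.range (N + 1), (-1 : ℤ) ^ (N - j) *
          (Module.finrank ℂ (LinearMap.ker (hodgeLaplacian V d j)) : ℤ) : ℤ) : ℂ) ≤
        ∑ j ∈ Finset.range (N + 1), (-1 : ℂ) ^ (N - j) * heatTrace V d t j :=
  heat_trace_alternating_sum_ge_general n V d hcomplex hdn
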